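/- Let b ≥ 1/2, T̃ > 0, let y : [0,T̃] → (0,∞) be continuous and let Ψ : [0,T̃] → ℝ be continuous. With the Bessel heat kernel q_s(z,ζ,b) = (√(zζ)/s)·(ζ/z)^b·exp(−(z²+ζ²)/(2s))·I_{b−1/2}(zζ/s), fix τ ∈ (0,T̃] and define, for z > max_{k∈[0,τ]} y(k), the Bessel potential q(τ,z) = ∫_0^τ Ψ(k)·[∂q_{τ−k}(z,ζ,b)/∂ζ]|_{ζ=y(k)} dk. Then q(τ,z) → 0 as z → ∞. -/

import Mathlib

/-- Modified Bessel function of the first kind,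
`I_ν(x) = Σ_{k=0}^∞ (x/2)^{2k+ν}/(k!·Γ(k+ν+1))`. -/
noncomputable def besselI (ν x : ℝ) : ℝ :=
  ∑' k : ℕ, (x / 2) ^ (2 * (k : ℝ) + ν) / ((Nat.factorial k : ℝ) * Real.Gamma ((k : ℝ) + ν + 1))

/-- Bessel heat kernel
`q_s(z,ζ,b) = (√(zζ)/s)·(ζ/z)^b·exp(−(z²+ζ²)/(2s))·I_{b−1/2}(zζ/s)`. -/
noncomputable def besselKernel (b s z ζ : ℝ) : ℝ :=
  Real.sqrt (z * ζ) / s * (ζ / z) ^ b * Real.exp (-(z ^ 2 + ζ ^ 2) / (2 * s)) *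
    besselI (b - 1 / 2) (z * ζ / s)

/-!
For `s, z, ζ > 0` the kernel factors as
`q_s(z,ζ,b) = (2s)^(1/2-b) s⁻¹ ζ^(2b) exp(-(z²+ζ²)/(2s)) F_{b-1/2}((zζ/(2s))²)`, where
`F_ν(t) = Σ t^k / (k! Γ(k+ν+1))` (`besselIReduced`) is entire with `F_ν' = F_{ν+1}` and, by
`(2k)! ≤ 4^k (k!)²`, is dominated termwise by the series of `cosh (2w) / Γ(ν+1)` at `t = w²`.
The exponentials then combine into the Gaussian `exp(-(z-ζ)²/(2s))`, so `∂_ζ q_s` is bounded by a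
power of `s⁻¹` and `z` times this Gaussian. For `ζ` between the minimum and maximum of `y` on
`[0, τ]`, `s ∈ (0, τ]` and `z` large, half of the Gaussian absorbs the power of `s⁻¹` and the other
half is at most `exp(-z²/(16τ))`, so the integrand tends to `0` uniformly in `k` and the integral
against the bounded `Ψ` tends to `0`.
-/

open Real Filter Set Topology MeasureTheory
open scoped Nat

theorem Nat.factorial_two_mul_le_four_pow_mul_sq (n : ℕ) : (2 * n)! ≤ 4 ^ n * n ! ^ 2 := by
  have h := Nat.choose_mul_factorial_mul_factorial (show n ≤ 2 * n by omega)
  rw [show 2 * n - n = n by omega, ← Nat.centralBinom_eq_two_mul_choose] at h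
  rw [← h, mul_assoc, sq]
  exact Nat.mul_le_mul_right _ (Nat.centralBinom_le_four_pow n)

namespace Real

variable {ν : ℝ}

theorem Gamma_add_one_mul_factorial_le (hν : 0 ≤ ν) (n : ℕ) :
    Gamma (ν + 1) * n ! ≤ Gamma (n + ν + 1) := by
  induction n with
  | zero => simp
  | succ n ih =>
    have hpos : 0 < (n : ℝ) + ν + 1 := by positivity
    rw [Nat.factorial_succ, show ((n + 1 : ℕ) : ℝ) + ν + 1 = (n + ν + 1) + 1 by push_cast; ring,
      Gamma_add_one hpos.ne']
    push_cast
    nlinarith [(by positivity : 0 ≤ Gamma (ν + 1) * n !)]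

theorem Gamma_add_one_mul_factorial_sq_le (hν : 0 ≤ ν) (k : ℕ) :
    Gamma (ν + 1) * (k ! : ℝ) ^ 2 ≤ k ! * Gamma (k + ν + 1) := by
  calc Gamma (ν + 1) * (k ! : ℝ) ^ 2 = k ! * (Gamma (ν + 1) * k !) := by ring
    _ ≤ _ := mul_le_mul_of_nonneg_left (Gamma_add_one_mul_factorial_le hν k) (by positivity)

theorem Gamma_add_one_le_Gamma_nat_add (hν : 0 ≤ ν) (k : ℕ) :
    Gamma (ν + 1) ≤ Gamma (k + ν + 1) := by
  calc Gamma (ν + 1) ≤ Gamma (ν + 1) * k ! :=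
        le_mul_of_one_le_right (by positivity) (by exact_mod_cast k.factorial_pos)
    _ ≤ _ := Gamma_add_one_mul_factorial_le hν k

theorem factorial_mul_Gamma_nat_add_pos (hν : 0 ≤ ν) (k : ℕ) :
    0 < (k ! : ℝ) * Gamma (k + ν + 1) := by
  positivity

end Real

noncomputable def besselIReduced (ν t : ℝ) : ℝ :=
  ∑' k : ℕ, t ^ k / (k ! * Gamma (k + ν + 1))

section besselIReduced

variable {ν : ℝ}

theorem abs_besselIReduced_term_le (hν : 0 ≤ ν) (t : ℝ) (k : ℕ) :
    |t ^ k / (k ! * Gamma (k + ν + 1))| ≤ |t| ^ k / k ! / Gamma (ν + 1) := by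
  rw [abs_div, abs_pow, abs_of_pos (factorial_mul_Gamma_nat_add_pos hν k), div_div]
  gcongr
  exact Gamma_add_one_le_Gamma_nat_add hν k

theorem summable_besselIReduced_term (hν : 0 ≤ ν) (t : ℝ) :
    Summable fun k : ℕ => t ^ k / (k ! * Gamma (k + ν + 1)) :=
  .of_norm_bounded ((Real.summable_pow_div_factorial |t|).div_const _)
    (abs_besselIReduced_term_le hν t)

theorem hasDerivAt_besselIReduced (hν : 0 ≤ ν) (t : ℝ) :
    HasDerivAt (besselIReduced ν) (besselIReduced (ν + 1) t) t := by
  set R := |t| + 1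
  have hR : 1 ≤ R := by simp [R]
  have hbound : ∀ k : ℕ, ∀ x ∈ Metric.ball (0 : ℝ) R,
      ‖k * x ^ (k - 1) / (k ! * Gamma (k + ν + 1))‖ ≤
        (2 * R) ^ k / k ! / Gamma (ν + 1) := by
    intro k x hx
    rw [mem_ball_zero_iff] at hx
    have hnum : ‖(k : ℝ) * x ^ (k - 1)‖ ≤ (2 * R) ^ k := by
      rw [norm_mul, norm_pow, Real.norm_natCast, mul_pow]
      have hk : (k : ℝ) ≤ 2 ^ k := by exact_mod_cast (Nat.lt_two_pow_self).le
      have hxR : ‖x‖ ^ (k - 1) ≤ R ^ k :=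
        (pow_le_pow_left₀ (norm_nonneg x) hx.le _).trans (pow_le_pow_right₀ hR (by omega))
      gcongr
    rw [norm_div, Real.norm_of_nonneg (factorial_mul_Gamma_nat_add_pos hν k).le, div_div]
    gcongr
    exact Gamma_add_one_le_Gamma_nat_add hν k
  have hsum := (summable_pow_div_factorial (2 * R)).div_const (Gamma (ν + 1))
  have hderiv := hasDerivAt_tsum_of_isPreconnected hsum Metric.isOpen_ball
    (convex_ball 0 R).isPreconnected (fun k x _ => (hasDerivAt_pow k x).div_const _)
    hbound (Metric.mem_ball_self (by linarith)) (summable_besselIReduced_term hν 0)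
    (show t ∈ Metric.ball 0 R by simp [R])
  suffices besselIReduced (ν + 1) t = ∑' k : ℕ, k * t ^ (k - 1) / (k ! * Gamma (k + ν + 1)) by
    rw [this]; exact hderiv
  rw [(Summable.of_norm_bounded hsum fun k => hbound k t (by simp [R])).tsum_eq_zero_add]
  simp only [besselIReduced, CharP.cast_eq_zero, zero_mul, zero_div, zero_add]
  congr 1 with k
  rw [Nat.factorial_succ, add_tsub_cancel_right]
  push_cast
  rw [show (k : ℝ) + 1 + ν + 1 = k + (ν + 1) + 1 by ring, mul_assoc,
    mul_div_mul_left _ _ (by positivity)]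

theorem besselIReduced_nonneg (hν : 0 ≤ ν) {t : ℝ} (ht : 0 ≤ t) :
    0 ≤ besselIReduced ν t :=
  tsum_nonneg fun k => div_nonneg (pow_nonneg ht k) (factorial_mul_Gamma_nat_add_pos hν k).le

theorem besselIReduced_sq_le_exp (hν : 0 ≤ ν) {w : ℝ} (hw : 0 ≤ w) :
    besselIReduced ν (w ^ 2) ≤ exp (2 * w) / Gamma (ν + 1) := by
  have hterm (k : ℕ) : (w ^ 2) ^ k / (k ! * Gamma (k + ν + 1))
      ≤ (2 * w) ^ (2 * k) / (2 * k)! / Gamma (ν + 1) := by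
    have hfac : ((2 * k)! : ℝ) ≤ 4 ^ k * k ! ^ 2 := by
      exact_mod_cast Nat.factorial_two_mul_le_four_pow_mul_sq k
    rw [div_div, div_le_div_iff₀ (factorial_mul_Gamma_nat_add_pos hν k) (by positivity),
      show (2 * w) ^ (2 * k) = 4 ^ k * (w ^ 2) ^ k by rw [mul_pow, pow_mul, pow_mul]; norm_num]
    calc (w ^ 2) ^ k * ((2 * k)! * Gamma (ν + 1))
        ≤ (w ^ 2) ^ k * ((4 ^ k * k ! ^ 2) * Gamma (ν + 1)) := by gcongr
      _ = (w ^ 2) ^ k * 4 ^ k * (Gamma (ν + 1) * k ! ^ 2) := by ring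
      _ ≤ (w ^ 2) ^ k * 4 ^ k * (k ! * Gamma (k + ν + 1)) := by
          gcongr ?_ * ?_
          exact Gamma_add_one_mul_factorial_sq_le hν k
      _ = _ := by ring
  calc besselIReduced ν (w ^ 2) ≤ cosh (2 * w) / Gamma (ν + 1) :=
        hasSum_le hterm (summable_besselIReduced_term hν _).hasSum
          ((hasSum_cosh (2 * w)).div_const _)
    _ ≤ exp (2 * w) / Gamma (ν + 1) := by
        gcongr
        rw [cosh_eq]
        linarith [exp_le_exp.2 (show -(2 * w) ≤ 2 * w by linarith)]

end besselIReduced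

theorem besselI_eq_rpow_mul_besselIReduced {ν x : ℝ} (hx : 0 < x) :
    besselI ν x = (x / 2) ^ ν * besselIReduced ν ((x / 2) ^ 2) := by
  rw [besselI, besselIReduced, ← tsum_mul_left]
  congr 1 with k
  rw [rpow_add (by positivity), show 2 * (k : ℝ) = (2 * k : ℕ) by push_cast; ring, rpow_natCast,
    pow_mul]
  ring

theorem besselKernel_eq_mul_besselIReduced {b s z ζ : ℝ} (hs : 0 < s) (hz : 0 < z)
    (hζ : 0 < ζ) :
    besselKernel b s z ζ = (2 * s) ^ (1 / 2 - b) / s *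
      (ζ ^ (2 * b) * exp (-(z ^ 2 + ζ ^ 2) / (2 * s)) *
        besselIReduced (b - 1 / 2) ((z * ζ / (2 * s)) ^ 2)) := by
  have hprefactor : sqrt (z * ζ) * (ζ / z) ^ b * (z * ζ / (2 * s)) ^ (b - 1 / 2)
      = (2 * s) ^ (1 / 2 - b) * ζ ^ (2 * b) := by
    rw [sqrt_eq_rpow, mul_rpow hz.le hζ.le, div_rpow hζ.le hz.le,
      div_rpow (by positivity) (by positivity), mul_rpow hz.le hζ.le,
      show 1 / 2 - b = -(b - 1 / 2) by ring, rpow_neg (by positivity),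
      show 2 * b = 1 / 2 + b + (b - 1 / 2) by ring, rpow_add hζ, rpow_add hζ]
    have hzb : z ^ (1 / 2 : ℝ) * z ^ (b - 1 / 2) = z ^ b := by
      rw [← rpow_add hz]; norm_num
    rw [← hzb]
    field_simp
  rw [besselKernel, besselI_eq_rpow_mul_besselIReduced (by positivity),
    show z * ζ / s / 2 = z * ζ / (2 * s) by ring]
  linear_combination (exp (-(z ^ 2 + ζ ^ 2) / (2 * s)) *
    besselIReduced (b - 1 / 2) ((z * ζ / (2 * s)) ^ 2) / s) * hprefactor

theorem hasDerivAt_besselKernel {b s z ζ : ℝ} (hb : 1 / 2 ≤ b) (hs : 0 < s) (hz : 0 < z)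
    (hζ : 0 < ζ) :
    HasDerivAt (besselKernel b s z)
      ((2 * s) ^ (1 / 2 - b) / s * (ζ ^ (2 * b) * exp (-(z ^ 2 + ζ ^ 2) / (2 * s)) *
        ((2 * b / ζ - ζ / s) * besselIReduced (b - 1 / 2) ((z * ζ / (2 * s)) ^ 2) +
          z * (z * ζ / (2 * s)) / s * besselIReduced (b - 1 / 2 + 1) ((z * ζ / (2 * s)) ^ 2))))
      ζ := by
  have hpow : HasDerivAt (fun x : ℝ => x ^ (2 * b)) (2 * b * ζ ^ (2 * b - 1)) ζ :=
    hasDerivAt_rpow_const (Or.inl hζ.ne')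
  have hgauss : HasDerivAt (fun x : ℝ => exp (-(z ^ 2 + x ^ 2) / (2 * s)))
      (exp (-(z ^ 2 + ζ ^ 2) / (2 * s)) * (-(2 * ζ) / (2 * s))) ζ := by
    have hexponent :
        HasDerivAt (fun x : ℝ => -(z ^ 2 + x ^ 2) / (2 * s)) (-(2 * ζ) / (2 * s)) ζ := by
      simpa using ((hasDerivAt_pow 2 ζ).const_add (z ^ 2)).neg.div_const (2 * s)
    exact hexponent.exp
  have hbessel : HasDerivAt (fun x : ℝ => besselIReduced (b - 1 / 2) ((z * x / (2 * s)) ^ 2))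
      (besselIReduced (b - 1 / 2 + 1) ((z * ζ / (2 * s)) ^ 2) *
        (2 * (z * ζ / (2 * s)) * (z / (2 * s)))) ζ := by
    have hinner : HasDerivAt (fun x : ℝ => (z * x / (2 * s)) ^ 2)
        (2 * (z * ζ / (2 * s)) * (z / (2 * s))) ζ := by
      refine ((((hasDerivAt_id ζ).const_mul z).div_const (2 * s)).pow 2).congr_deriv ?_
      simp only [id, mul_one, Nat.cast_ofNat]
      ring
    exact (hasDerivAt_besselIReduced (by linarith) _).comp ζ hinner
  have := ((hpow.mul hgauss).mul hbessel).const_mul ((2 * s) ^ (1 / 2 - b) / s)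
  simp only [Pi.mul_apply] at this
  refine this.congr_of_eventuallyEq ?_ |>.congr_deriv ?_
  · filter_upwards [eventually_gt_nhds hζ] with x hx
    exact besselKernel_eq_mul_besselIReduced hs hz hx
  · rw [rpow_sub_one hζ.ne']
    field_simp
    ring

theorem abs_deriv_besselKernel_le {b s z ζ : ℝ} (hb : 1 / 2 ≤ b) (hs : 0 < s) (hz : 0 < z)
    (hζ : 0 < ζ) :
    |deriv (besselKernel b s z) ζ| ≤ s⁻¹ ^ (b + 1 / 2) * ζ ^ (2 * b) *
      exp (-(z - ζ) ^ 2 / (2 * s)) *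
        ((2 * b / ζ + ζ / s + z * (z * ζ / (2 * s)) / s) / Gamma (b + 1 / 2)) := by
  rw [(hasDerivAt_besselKernel hb hs hz hζ).deriv]
  set w := z * ζ / (2 * s) with hw
  set H := besselIReduced (b - 1 / 2) (w ^ 2)
  set H₁ := besselIReduced (b - 1 / 2 + 1) (w ^ 2)
  have hw0 : 0 ≤ w := by positivity
  have hΓ : Gamma (b + 1 / 2) ≤ Gamma (b - 1 / 2 + 1 + 1) := by
    rw [show b - 1 / 2 + 1 + 1 = b + 1 / 2 + 1 by ring, Gamma_add_one (by linarith)]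
    exact le_mul_of_one_le_left (Gamma_pos_of_pos (by linarith)).le (by linarith)
  have hH : H ≤ exp (2 * w) / Gamma (b + 1 / 2) := by
    rw [show b + 1 / 2 = b - 1 / 2 + 1 by ring]
    exact besselIReduced_sq_le_exp (by linarith) hw0
  have hH₁ : H₁ ≤ exp (2 * w) / Gamma (b + 1 / 2) :=
    (besselIReduced_sq_le_exp (by linarith) hw0).trans
      (div_le_div_of_nonneg_left (exp_pos _).le (Gamma_pos_of_pos (by linarith)) hΓ)
  have hsum : |(2 * b / ζ - ζ / s) * H + z * w / s * H₁| ≤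
      (2 * b / ζ + ζ / s + z * w / s) * (exp (2 * w) / Gamma (b + 1 / 2)) := by
    have hH0 : 0 ≤ H := besselIReduced_nonneg (by linarith) (sq_nonneg w)
    have hH₁0 : 0 ≤ H₁ := besselIReduced_nonneg (by linarith) (sq_nonneg w)
    have : 0 ≤ 2 * b / ζ := by positivity
    have : 0 ≤ ζ / s := by positivity
    have : 0 ≤ z * w / s := by positivity
    rw [abs_le]; constructor <;> nlinarith
  have hprefactor : (2 * s) ^ (1 / 2 - b) / s ≤ s⁻¹ ^ (b + 1 / 2) := calc
    _ ≤ s ^ (1 / 2 - b) / s :=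
      div_le_div_of_nonneg_right (rpow_le_rpow_of_nonpos hs (by linarith) (by linarith)) hs.le
    _ = s⁻¹ ^ (b + 1 / 2) := by
      rw [show b + 1 / 2 = -(1 / 2 - b) + 1 by ring, rpow_add_one (inv_pos.2 hs).ne',
        inv_rpow hs.le, rpow_neg hs.le, inv_inv, div_eq_mul_inv]
  have hgauss :
      exp (-(z ^ 2 + ζ ^ 2) / (2 * s)) * exp (2 * w) = exp (-(z - ζ) ^ 2 / (2 * s)) := by
    rw [← exp_add, hw]
    congr 1
    field_simp
    ring
  rw [abs_mul, abs_of_nonneg (by positivity), abs_mul, abs_of_nonneg (by positivity)]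
  calc _ ≤ s⁻¹ ^ (b + 1 / 2) * (ζ ^ (2 * b) * exp (-(z ^ 2 + ζ ^ 2) / (2 * s)) *
        ((2 * b / ζ + ζ / s + z * w / s) * (exp (2 * w) / Gamma (b + 1 / 2)))) := by
        gcongr
    _ = _ := by rw [← hgauss]; ring

theorem exists_rpow_mul_exp_neg_le {q : ℝ} (hq : 0 ≤ q) :
    ∃ C, ∀ u : ℝ, 0 ≤ u → u ^ q * exp (-u) ≤ C := by
  refine ⟨⌈q⌉₊ ! * exp 1, fun u hu => ?_⟩
  have hpow : u ^ q ≤ (1 + u) ^ ⌈q⌉₊ := calc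
    u ^ q ≤ (1 + u) ^ q := rpow_le_rpow hu (by linarith) hq
    _ ≤ (1 + u) ^ (⌈q⌉₊ : ℝ) := rpow_le_rpow_of_exponent_le (by linarith) (Nat.le_ceil q)
    _ = _ := rpow_natCast _ _
  have hexp : (1 + u) ^ ⌈q⌉₊ ≤ ⌈q⌉₊ ! * exp (1 + u) := by
    have := pow_div_factorial_le_exp (1 + u) (by linarith) ⌈q⌉₊
    rwa [div_le_iff₀' (by positivity)] at this
  calc u ^ q * exp (-u) ≤ ⌈q⌉₊ ! * exp (1 + u) * exp (-u) := by
        gcongr; exact hpow.trans hexp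
    _ = ⌈q⌉₊ ! * exp 1 := by rw [mul_assoc, ← exp_add, add_neg_cancel_right]

theorem exists_abs_deriv_besselKernel_le {b m M τ : ℝ} (hb : 1 / 2 ≤ b) (hm : 0 < m) :
    ∃ K ≥ 0, ∀ z, max (2 * M) 4 ≤ z → ∀ s ∈ Ioc 0 τ, ∀ ζ ∈ Icc m M,
      |deriv (besselKernel b s z) ζ| ≤
        K * z ^ 2 * (s⁻¹ ^ (b + 5 / 2) * exp (-z ^ 2 / (8 * s))) := by
  set B := 2 * b / m * τ ^ 2 + M * τ + M / 2
  refine ⟨max (M ^ (2 * b) * B / Gamma (b + 1 / 2)) 0, le_max_right _ _,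
    fun z hz s ⟨hs, hsτ⟩ ζ ⟨hmζ, hζM⟩ => ?_⟩
  have hz4 : 4 ≤ z := le_of_max_le_right hz
  have hζ0 : 0 < ζ := hm.trans_le hmζ
  have hM : 0 < M := hζ0.trans_le hζM
  have hb0 : 0 ≤ 2 * b := by linarith
  have hτs : 1 ≤ τ * s⁻¹ := by rw [← div_eq_mul_inv, one_le_div hs]; exact hsτ
  have hpow : ζ ^ (2 * b) ≤ M ^ (2 * b) := rpow_le_rpow hζ0.le hζM hb0
  have hgauss : exp (-(z - ζ) ^ 2 / (2 * s)) ≤ exp (-z ^ 2 / (8 * s)) := by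
    have hzζ : (z / 2) ^ 2 ≤ (z - ζ) ^ 2 :=
      pow_le_pow_left₀ (by positivity) (by linarith [le_of_max_le_left hz]) 2
    rw [exp_le_exp, neg_div, neg_div, neg_le_neg_iff,
      div_le_div_iff₀ (by positivity) (by positivity)]
    nlinarith [mul_le_mul_of_nonneg_right hzζ hs.le]
  have hbracket : 2 * b / ζ + ζ / s + z * (z * ζ / (2 * s)) / s ≤ z ^ 2 * s⁻¹ ^ 2 * B := by
    have hlast : z * (z * ζ / (2 * s)) / s ≤ z ^ 2 * s⁻¹ ^ 2 * (M / 2) := by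
      rw [show z * (z * ζ / (2 * s)) / s = z ^ 2 * s⁻¹ ^ 2 * (ζ / 2) by field_simp]
      gcongr
    have hz2 : 1 ≤ z ^ 2 := one_le_pow₀ (by linarith)
    calc _ ≤ 2 * b / m * 1 + M * s⁻¹ * 1 + z ^ 2 * s⁻¹ ^ 2 * (M / 2) := by
          rw [mul_one, mul_one, div_eq_mul_inv ζ]
          gcongr
      _ ≤ 2 * b / m * (τ * s⁻¹) ^ 2 + M * s⁻¹ * (τ * s⁻¹) +
            z ^ 2 * s⁻¹ ^ 2 * (M / 2) := by
          gcongr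
          exact one_le_pow₀ hτs
      _ ≤ z ^ 2 * (2 * b / m * (τ * s⁻¹) ^ 2 + M * s⁻¹ * (τ * s⁻¹)) +
            z ^ 2 * s⁻¹ ^ 2 * (M / 2) := by
          gcongr
          exact le_mul_of_one_le_left (by positivity) hz2
      _ = z ^ 2 * s⁻¹ ^ 2 * B := by ring
  calc _ ≤ s⁻¹ ^ (b + 1 / 2) * M ^ (2 * b) * exp (-z ^ 2 / (8 * s)) *
        (z ^ 2 * s⁻¹ ^ 2 * B / Gamma (b + 1 / 2)) :=
        (abs_deriv_besselKernel_le hb hs (by linarith) hζ0).trans (by gcongr)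
    _ = M ^ (2 * b) * B / Gamma (b + 1 / 2) * z ^ 2 *
        (s⁻¹ ^ (b + 1 / 2) * s⁻¹ ^ 2 * exp (-z ^ 2 / (8 * s))) := by ring
    _ ≤ _ := by
        rw [← rpow_add_natCast (inv_pos.2 hs).ne', show b + 1 / 2 + (2 : ℕ) = b + 5 / 2 by
          push_cast; ring]
        gcongr
        exact le_max_left _ _

theorem inv_rpow_mul_exp_neg_sq_le {q C τ s z : ℝ}
    (hC : ∀ u : ℝ, 0 ≤ u → u ^ q * exp (-u) ≤ C) (hs : 0 < s) (hsτ : s ≤ τ)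
    (hz : 4 ≤ z) :
    s⁻¹ ^ q * exp (-z ^ 2 / (8 * s)) ≤ C * exp (-z ^ 2 / (16 * τ)) := by
  have hz2 : 1 ≤ z ^ 2 / 16 := by rw [le_div_iff₀ (by norm_num)]; nlinarith
  have hexp : exp (-z ^ 2 / (8 * s)) ≤ exp (-s⁻¹) * exp (-z ^ 2 / (16 * τ)) := by
    have h1 : s⁻¹ ≤ z ^ 2 / 16 * s⁻¹ := le_mul_of_one_le_left (inv_pos.2 hs).le hz2
    have h2 : z ^ 2 / (16 * τ) ≤ z ^ 2 / 16 * s⁻¹ := by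
      rw [← div_eq_mul_inv, div_div]
      gcongr
    rw [← exp_add, exp_le_exp, neg_div, neg_div,
      show -(z ^ 2 / (8 * s)) = -(z ^ 2 / 16 * s⁻¹) - z ^ 2 / 16 * s⁻¹ by field_simp; ring]
    linarith
  calc s⁻¹ ^ q * exp (-z ^ 2 / (8 * s))
      ≤ s⁻¹ ^ q * exp (-s⁻¹) * exp (-z ^ 2 / (16 * τ)) := by
        rw [mul_assoc]; gcongr
    _ ≤ C * exp (-z ^ 2 / (16 * τ)) := by
        gcongr
        exact hC _ (inv_pos.2 hs).le

theorem tendstoUniformlyOn_deriv_besselKernel {b m M τ : ℝ} (hb : 1 / 2 ≤ b) (hm : 0 < m)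
    (hτ : 0 < τ) :
    TendstoUniformlyOn (fun z (p : ℝ × ℝ) => deriv (besselKernel b p.1 z) p.2) 0 atTop
      (Ioc 0 τ ×ˢ Icc m M) := by
  obtain ⟨K, hK0, hK⟩ := exists_abs_deriv_besselKernel_le hb hm (M := M) (τ := τ)
  obtain ⟨C, hC⟩ := exists_rpow_mul_exp_neg_le (q := b + 5 / 2) (by linarith)
  have hC0 : 0 ≤ C :=
    (by positivity : (0 : ℝ) ≤ 1 ^ (b + 5 / 2) * exp (-1)).trans (hC 1 zero_le_one)
  have hlim : Tendsto (fun z => K * C * 16 * τ * (z ^ 2 / (16 * τ)) ^ 1 *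
      exp (-(z ^ 2 / (16 * τ)))) atTop (𝓝 0) := by
    simpa [mul_assoc] using ((tendsto_pow_mul_exp_neg_atTop_nhds_zero 1).comp
      ((tendsto_pow_atTop two_ne_zero).atTop_div_const (by positivity))).const_mul (K * C * 16 * τ)
  rw [Metric.tendstoUniformlyOn_iff]
  intro ε hε
  filter_upwards [hlim.eventually (gt_mem_nhds hε), eventually_ge_atTop (max (2 * M) 4)]
    with z hzε hz
  rintro ⟨s, ζ⟩ ⟨⟨hs, hsτ⟩, hζ⟩
  rw [Pi.zero_apply, Real.dist_eq, zero_sub, abs_neg]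
  refine lt_of_le_of_lt ?_ hzε
  calc _ ≤ K * z ^ 2 * (s⁻¹ ^ (b + 5 / 2) * exp (-z ^ 2 / (8 * s))) :=
        hK z hz s ⟨hs, hsτ⟩ ζ hζ
    _ ≤ K * z ^ 2 * (C * exp (-z ^ 2 / (16 * τ))) :=
        mul_le_mul_of_nonneg_left (inv_rpow_mul_exp_neg_sq_le hC hs hsτ (le_of_max_le_right hz))
          (by positivity)
    _ = _ := by field_simp

theorem tendsto_intervalIntegral_mul_of_tendstoUniformlyOn {ι : Type*} {l : Filter ι}
    {a b C : ℝ} {Ψ : ℝ → ℝ} {F : ι → ℝ → ℝ} (hab : a ≤ b)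
    (hΨ : ∀ k ∈ Ioo a b, |Ψ k| ≤ C) (hF : TendstoUniformlyOn F 0 l (Ioo a b)) :
    Tendsto (fun i => ∫ k in a..b, Ψ k * F i k) l (𝓝 0) := by
  rw [Metric.tendsto_nhds]
  intro ε hε
  set δ := ε / ((|C| + 1) * (b - a + 1))
  filter_upwards [Metric.tendstoUniformlyOn_iff.1 hF δ (by positivity)] with i hi
  have hbound : ∀ᵐ k, k ∈ uIoc a b → ‖Ψ k * F i k‖ ≤ |C| * δ := by
    filter_upwards [volume.ae_ne b] with k hkb hk
    rw [uIoc_of_le hab] at hk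
    have hk' : k ∈ Ioo a b := ⟨hk.1, lt_of_le_of_ne hk.2 hkb⟩
    have hFk := hi k hk'
    rw [Pi.zero_apply, Real.dist_eq, zero_sub, abs_neg] at hFk
    rw [norm_mul, Real.norm_eq_abs, Real.norm_eq_abs]
    exact mul_le_mul ((hΨ k hk').trans (le_abs_self C)) hFk.le (abs_nonneg _) (abs_nonneg _)
  rw [Real.dist_eq, sub_zero]
  calc _ ≤ |C| * δ * |b - a| := intervalIntegral.norm_integral_le_of_norm_le_const_ae hbound
    _ = ε * (|C| * (b - a) / ((|C| + 1) * (b - a + 1))) := by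
        rw [abs_of_nonneg (sub_nonneg.2 hab)]; ring
    _ < ε * 1 := by
        gcongr
        rw [div_lt_one (by positivity)]
        nlinarith [abs_nonneg C, sub_nonneg.2 hab]
    _ = ε := mul_one ε

theorem bessel_potential_vanishes_at_infinity_general
    (b T' : ℝ) (hb : 1 / 2 ≤ b)
    (y Ψ : ℝ → ℝ)
    (hy : ContinuousOn y (Set.Icc 0 T'))
    (hypos : ∀ k ∈ Set.Icc (0 : ℝ) T', 0 < y k)
    (hΨ : ContinuousOn Ψ (Set.Icc 0 T'))
    (τ : ℝ) (hτ : τ ∈ Set.Ioc 0 T') :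
    Filter.Tendsto
      (fun z => ∫ k in (0 : ℝ)..τ,
        Ψ k * deriv (fun ζ => besselKernel b (τ - k) z ζ) (y k))
      Filter.atTop (nhds 0) := by
  obtain ⟨hτ0, hτT⟩ := hτ
  have hsub : Icc 0 τ ⊆ Icc 0 T' := Icc_subset_Icc_right hτT
  have hne : (Icc 0 τ).Nonempty := nonempty_Icc.2 hτ0.le
  obtain ⟨kmin, hkmin, hmin⟩ := isCompact_Icc.exists_isMinOn hne (hy.mono hsub)
  obtain ⟨kmax, -, hmax⟩ := isCompact_Icc.exists_isMaxOn hne (hy.mono hsub)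
  obtain ⟨C, hC⟩ := isCompact_Icc.exists_bound_of_continuousOn (hΨ.mono hsub)
  have hunif := (tendstoUniformlyOn_deriv_besselKernel hb (hypos kmin (hsub hkmin)) hτ0
    (M := y kmax)).comp fun k => (τ - k, y k)
  refine tendsto_intervalIntegral_mul_of_tendstoUniformlyOn hτ0.le
    (fun k hk => hC k (Ioo_subset_Icc_self hk)) (hunif.mono fun k hk => ?_)
  have hk' := Ioo_subset_Icc_self hk
  exact ⟨⟨by linarith [hk.2], by linarith [hk.1]⟩, hmin hk', hmax hk'⟩

/-- the single-layer Bessel potential vanishes at spatial infinity: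
`q(τ,z) = ∫_0^τ Ψ(k)·[∂q_{τ−k}(z,ζ,b)/∂ζ]|_{ζ=y(k)} dk → 0` as `z → ∞`. -/
theorem bessel_potential_vanishes_at_infinity
    (b T' : ℝ) (hb : 1 / 2 ≤ b) (hT' : 0 < T')
    (y Ψ : ℝ → ℝ)
    (hy : ContinuousOn y (Set.Icc 0 T'))
    (hypos : ∀ k ∈ Set.Icc (0 : ℝ) T', 0 < y k)
    (hΨ : ContinuousOn Ψ (Set.Icc 0 T'))
    (τ : ℝ) (hτ : τ ∈ Set.Ioc 0 T') :
    Filter.Tendsto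
      (fun z => ∫ k in (0 : ℝ)..τ,
        Ψ k * deriv (fun ζ => besselKernel b (τ - k) z ζ) (y k))
      Filter.atTop (nhds 0) :=
  bessel_potential_vanishes_at_infinity_general b T' hb y Ψ hy hypos hΨ τ hτ
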